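/- Let T be a measure-preserving transformation of a probability space (X, ℱ, μ) and let 𝔸 : ℕ × X → ℝ^{d×d} be a measurable linear cocycle over T such that x ↦ log⁺‖𝔸(1,x)‖ is μ-integrable. For x ∈ X and λ ∈ ℝ let V_λ(x) = {v ∈ ℝ^d : limsup_{n→∞} (1/n) log‖𝔸(n,x)v‖ ≤ λ} (a linear subspace of ℝ^d, with the convention log 0 = −∞). Then for μ-a.e. x ∈ X and every λ ∈ ℝ, dim V_λ(T x) = dim V_λ(x). -/

import Mathlib

open MeasureTheory Filter Topology

noncomputable section

instance matMeasurableSpace {d : ℕ} : MeasurableSpace (Matrix (Fin d) (Fin d) ℝ) :=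
  inferInstanceAs (MeasurableSpace (Fin d → Fin d → ℝ))

/-- The action of a `d × d` real matrix on `ℝ^d` with the Euclidean norm. -/
def matApp {d : ℕ} (B : Matrix (Fin d) (Fin d) ℝ) (v : EuclideanSpace ℝ (Fin d)) :
    EuclideanSpace ℝ (Fin d) :=
  Matrix.toEuclideanLin B v

/-- The operator norm of a `d × d` real matrix induced by the Euclidean norm on `ℝ^d`. -/
def matOpNorm {d : ℕ} (B : Matrix (Fin d) (Fin d) ℝ) : ℝ :=
  ‖LinearMap.toContinuousLinearMap (Matrix.toEuclideanLin B)‖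

/-- The natural logarithm with values in `EReal`, with the convention `log 0 = -∞`. -/
def elog (t : ℝ) : EReal := if t = 0 then ⊥ else ((Real.log t : ℝ) : EReal)

/-- The operator norm of the restriction of (the linear map induced by) `B` to a set `S`:
`sup {‖Bv‖ : v ∈ S, ‖v‖ = 1}`. -/
def restNorm {d : ℕ} (B : Matrix (Fin d) (Fin d) ℝ) (S : Set (EuclideanSpace ℝ (Fin d))) : ℝ :=
  sSup {r | ∃ v ∈ S, ‖v‖ = 1 ∧ r = ‖matApp B v‖}

/-- The stable space of the cocycle `𝔸` over the point `x`. -/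
def stableSet {X : Type*} {d : ℕ} (𝔸 : ℕ → X → Matrix (Fin d) (Fin d) ℝ) (x : X) :
    Set (EuclideanSpace ℝ (Fin d)) :=
  {v | Tendsto (fun n => ‖matApp (𝔸 n x) v‖) atTop (𝓝 0)}


/-! The cocycle identity `𝔸(n, Tx) 𝔸(1, x) = 𝔸(n + 1, x)` gives `V_λ(x) = 𝔸(1, x)⁻¹ V_λ(Tx)`, hence
`dim V_λ(Tx) ≤ dim V_λ(x)` everywhere. A measurable `ℕ`-valued function that can only decrease
along a measure-preserving map is invariant almost everywhere, because each superlevel set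
contains its preimage and has the same (finite) measure.

Measurability of `x ↦ dim V_λ(x)`: `dim V_λ(x) ≥ k` iff for every rational `c > λ` some
orthonormal `k`-frame `v` satisfies `‖𝔸(n, x) vₗ‖ ≤ e^{nc}` for all large `n` (the family `V_c`
is right-continuous and stabilises above `λ`). The space of frames is compact, so the existence of
such a frame can be tested, with a vanishing slack on finite time windows, on a countable dense set
of frames.
Finally `V_λ = V_c` for rational `c` slightly above `λ`, so countably many `λ` suffice. -/
open Real

lemma eventually_mul_exp_le (K : ℝ) {c' c : ℝ} (h : c' < c) :
    ∀ᶠ n : ℕ in atTop, K * exp (n * c') ≤ exp (n * c) := by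
  have hlim : Tendsto (fun n : ℕ => exp (n * (c - c'))) atTop atTop :=
    tendsto_exp_atTop.comp (tendsto_natCast_atTop_atTop.atTop_mul_const (sub_pos.2 h))
  filter_upwards [hlim.eventually_ge_atTop K] with n hn
  calc K * exp (n * c') ≤ exp (n * (c - c')) * exp (n * c') := by gcongr
    _ = exp (n * c) := by rw [← exp_add]; ring_nf

/-- Equivalent to `limsup (log t n) / n ≤ lam` (`limsup_inv_mul_elog_le_iff`), but in a form
stable under sums, positive multiples and shifts. -/
def HasGrowthAtMost (t : ℕ → ℝ) (lam : ℝ) : Prop :=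
  ∀ c, lam < c → ∀ᶠ n : ℕ in atTop, t n ≤ exp (n * c)

namespace HasGrowthAtMost

variable {s t : ℕ → ℝ} {lam : ℝ}

lemma of_eventually_le (h : ∀ᶠ n : ℕ in atTop, t n ≤ exp (n * lam)) : HasGrowthAtMost t lam :=
  fun c hc => h.mono fun n hn => hn.trans (exp_le_exp.2 (by gcongr))

lemma mono {lam' : ℝ} (ht : HasGrowthAtMost t lam) (h : lam ≤ lam') : HasGrowthAtMost t lam' :=
  fun c hc => ht c (h.trans_lt hc)

lemma of_nhdsGT (h : ∀ᶠ c in 𝓝[>] lam, HasGrowthAtMost t c) : HasGrowthAtMost t lam := by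
  intro c hc
  obtain ⟨c', hc', hc'c⟩ := (h.and (Ioo_mem_nhdsGT hc)).exists
  exact hc' c hc'c.2

lemma of_le_add (hs : HasGrowthAtMost s lam) (ht : HasGrowthAtMost t lam) {u : ℕ → ℝ}
    (hu : ∀ n, u n ≤ s n + t n) : HasGrowthAtMost u lam := by
  intro c hc
  obtain ⟨c', hlam, hc'⟩ := exists_between hc
  filter_upwards [hs c' hlam, ht c' hlam, eventually_mul_exp_le 2 hc'] with n hsn htn hn
  linarith [hu n]

lemma const_mul (ht : HasGrowthAtMost t lam) {K : ℝ} (hK : 0 ≤ K) :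
    HasGrowthAtMost (fun n => K * t n) lam := by
  intro c hc
  obtain ⟨c', hlam, hc'⟩ := exists_between hc
  filter_upwards [ht c' hlam, eventually_mul_exp_le K hc'] with n htn hn
  exact (mul_le_mul_of_nonneg_left htn hK).trans hn

lemma comp_add_one_iff : HasGrowthAtMost (fun n => t (n + 1)) lam ↔ HasGrowthAtMost t lam := by
  refine ⟨fun ht c hc => ?_, fun ht c hc => ?_⟩ <;> obtain ⟨c', hlam, hc'⟩ := exists_between hc
  · rw [← map_add_atTop_eq_nat 1, eventually_map]
    filter_upwards [ht c' hlam,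
      (tendsto_add_atTop_nat 1).eventually (eventually_mul_exp_le (exp (-c')) hc')] with n htn hn
    refine htn.trans (le_of_eq_of_le ?_ hn)
    rw [← exp_add]; push_cast; ring_nf
  · filter_upwards [(tendsto_add_atTop_nat 1).eventually (ht c' hlam),
      eventually_mul_exp_le (exp c') hc'] with n htn hn
    refine htn.trans (le_of_eq_of_le ?_ hn)
    rw [← exp_add]; push_cast; ring_nf

end HasGrowthAtMost

lemma inv_mul_elog_le_iff {n : ℕ} (hn : n ≠ 0) {t : ℝ} (ht : 0 ≤ t) (c : ℝ) :
    (((n : ℝ)⁻¹ : ℝ) : EReal) * elog t ≤ c ↔ t ≤ exp (n * c) := by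
  have hn' : (0 : ℝ) < n := by positivity
  rcases ht.eq_or_lt with rfl | ht
  · simp only [elog, if_pos, (exp_pos _).le, iff_true]
    rw [EReal.mul_bot_of_pos (by exact_mod_cast inv_pos.2 hn')]
    exact bot_le
  · rw [elog, if_neg ht.ne', ← EReal.coe_mul, EReal.coe_le_coe_iff, inv_mul_le_iff₀ hn',
      log_le_iff_le_exp ht]

lemma limsup_inv_mul_elog_le_iff {t : ℕ → ℝ} (ht : ∀ n, 0 ≤ t n) (lam : ℝ) :
    limsup (fun n : ℕ => (((n : ℝ)⁻¹ : ℝ) : EReal) * elog (t n)) atTop ≤ lam ↔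
      HasGrowthAtMost t lam := by
  have key : ∀ c : ℝ, (∀ᶠ n : ℕ in atTop, (((n : ℝ)⁻¹ : ℝ) : EReal) * elog (t n) ≤ c) ↔
      ∀ᶠ n : ℕ in atTop, t n ≤ exp (n * c) := fun c =>
    eventually_congr ((eventually_ne_atTop 0).mono fun n hn => inv_mul_elog_le_iff hn (ht n) c)
  rw [limsup_le_iff]
  refine ⟨fun h c hc => (key c).1 ((h c (by exact_mod_cast hc)).mono fun _ => le_of_lt),
    fun h y hy => ?_⟩
  obtain ⟨c, hlam, hy⟩ := EReal.exists_between_coe_real hy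
  exact ((key c).2 (h c (by exact_mod_cast hlam))).mono fun _ hn => hn.trans_lt hy

lemma Monotone.exists_forall_Ioc_eq {α β : Type*} [Preorder α] [NoMaxOrder α] [PartialOrder β]
    [WellFoundedLT β] {W : α → β} (hW : Monotone W) (a : α) :
    ∃ b, a < b ∧ ∀ c, a < c → c ≤ b → W c = W b := by
  obtain ⟨_, ⟨b, hab, rfl⟩, hmin⟩ :=
    wellFounded_lt.has_min (W '' Set.Ioi a) (Set.nonempty_Ioi.image W)
  exact ⟨b, hab, fun c hac hcb =>
    (hW hcb).eq_of_not_lt (hmin _ (Set.mem_image_of_mem W hac))⟩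

section GrowthSubspace

variable {E F : Type*} [NormedAddCommGroup E] [NormedSpace ℝ E]
  [NormedAddCommGroup F] [NormedSpace ℝ F]

def growthSubspace (M : ℕ → E →ₗ[ℝ] F) (lam : ℝ) : Submodule ℝ E where
  carrier := {v | HasGrowthAtMost (fun n => ‖M n v‖) lam}
  zero_mem' := by
    simpa using HasGrowthAtMost.of_eventually_le (.of_forall fun n => (exp_pos (n * lam)).le)
  add_mem' {v w} hv hw := hv.of_le_add hw fun n => by simpa using norm_add_le (M n v) (M n w)
  smul_mem' a v hv := by
    simpa [norm_smul] using hv.const_mul (abs_nonneg a)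

variable {M : ℕ → E →ₗ[ℝ] F} {lam : ℝ}

lemma mem_growthSubspace {v : E} :
    v ∈ growthSubspace M lam ↔ HasGrowthAtMost (fun n => ‖M n v‖) lam := Iff.rfl

lemma growthSubspace_mono (M : ℕ → E →ₗ[ℝ] F) : Monotone (growthSubspace M) :=
  fun _ _ h _ hv => HasGrowthAtMost.mono hv h

lemma exists_growthSubspace_eq [FiniteDimensional ℝ E] (M : ℕ → E →ₗ[ℝ] F) (lam : ℝ) :
    ∃ b, lam < b ∧ ∀ c, lam < c → c ≤ b → growthSubspace M c = growthSubspace M lam := by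
  obtain ⟨b, hb, hW⟩ := (growthSubspace_mono M).exists_forall_Ioc_eq lam
  suffices growthSubspace M b = growthSubspace M lam from ⟨b, hb, fun c h₁ h₂ => this ▸ hW c h₁ h₂⟩
  refine le_antisymm (fun v hv => HasGrowthAtMost.of_nhdsGT ?_) (growthSubspace_mono M hb.le)
  filter_upwards [Ioc_mem_nhdsGT hb] with c hc
  rw [← mem_growthSubspace, hW c hc.1 hc.2]
  exact hv

lemma growthSubspace_comp_add_one :
    growthSubspace (fun n => M (n + 1)) lam = growthSubspace M lam :=
  Submodule.ext fun v => HasGrowthAtMost.comp_add_one_iff (t := fun n => ‖M n v‖)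

lemma growthSubspace_comp {E' : Type*} [NormedAddCommGroup E'] [NormedSpace ℝ E']
    (f : E' →ₗ[ℝ] E) :
    growthSubspace (fun n => M n ∘ₗ f) lam = (growthSubspace M lam).comap f := rfl

lemma setOf_limsup_le_eq_growthSubspace (M : ℕ → E →ₗ[ℝ] F) (lam : ℝ) :
    {v | limsup (fun n : ℕ => (((n : ℝ)⁻¹ : ℝ) : EReal) * elog ‖M n v‖) atTop ≤ lam} =
      growthSubspace M lam :=
  Set.ext fun _ => limsup_inv_mul_elog_le_iff (fun _ => norm_nonneg _) lam

lemma span_setOf_limsup_le_eq_growthSubspace (M : ℕ → E →ₗ[ℝ] F) (lam : ℝ) :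
    Submodule.span ℝ
      {v | limsup (fun n : ℕ => (((n : ℝ)⁻¹ : ℝ) : EReal) * elog ‖M n v‖) atTop ≤ lam} =
      growthSubspace M lam := by
  rw [setOf_limsup_le_eq_growthSubspace, Submodule.span_eq]

end GrowthSubspace

lemma Submodule.finrank_le_finrank_comap {K V : Type*} [DivisionRing K] [AddCommGroup V]
    [Module K V] [FiniteDimensional K V] (f : V →ₗ[K] V) (W : Submodule K V) :
    Module.finrank K W ≤ Module.finrank K (W.comap f) := by
  have hinj : Function.Injective ((W.comap f).mapQ W f le_rfl) := by
    rw [← LinearMap.ker_eq_bot]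
    exact Submodule.ker_liftQ_eq_bot _ _ _ (by rw [LinearMap.ker_comp, Submodule.ker_mkQ])
  have := LinearMap.finrank_le_finrank_of_injective hinj
  have h₁ := (W.comap f).finrank_quotient_add_finrank
  have h₂ := W.finrank_quotient_add_finrank
  omega

lemma IsCompact.exists_eventually_le_iff {Y : Type*} [TopologicalSpace Y]
    [FirstCountableTopology Y]
    {K t : Set Y} (hK : IsCompact K) (htK : t ⊆ K) (hKt : K ⊆ closure t)
    {f : ℕ → Y → ℝ} (hf : ∀ n, Continuous (f n)) (b : ℕ → ℝ) :
    (∃ y ∈ K, ∀ᶠ n in atTop, f n y ≤ b n) ↔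
      ∃ N, ∀ m : ℕ, ∃ y ∈ t, ∀ n ∈ Finset.Icc N m, f n y < b n + 1 / (m + 1) := by
  constructor
  · rintro ⟨y, hy, h⟩
    obtain ⟨N, hN⟩ := eventually_atTop.1 h
    refine ⟨N, fun m => ?_⟩
    have hU : IsOpen {z | ∀ n ∈ Finset.Icc N m, f n z < b n + 1 / (m + 1)} := by
      simp only [Set.ofPred_forall]
      exact isOpen_biInter_finset fun n _ => isOpen_lt (hf n) continuous_const
    obtain ⟨z, hzU, hzt⟩ := mem_closure_iff.1 (hKt hy) _ hU fun n hn =>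
      (hN n (Finset.mem_Icc.1 hn).1).trans_lt (lt_add_of_pos_right _ Nat.one_div_pos_of_nat)
    exact ⟨z, hzt, hzU⟩
  · rintro ⟨N, h⟩
    choose y hyt hy using h
    obtain ⟨z, hzK, φ, hφ, hlim⟩ := hK.tendsto_subseq fun m => htK (hyt m)
    refine ⟨z, hzK, eventually_atTop.2 ⟨N, fun n hn => ?_⟩⟩
    have hslack : Tendsto (fun j => b n + 1 / ((φ j : ℝ) + 1)) atTop (𝓝 (b n + 0)) :=
      tendsto_const_nhds.add (tendsto_one_div_add_atTop_nhds_zero_nat.comp hφ.tendsto_atTop)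
    refine add_zero (b n) ▸ le_of_tendsto_of_tendsto ((hf n).tendsto z |>.comp hlim) hslack ?_
    filter_upwards [eventually_ge_atTop n] with j hj
    exact (hy (φ j) n (Finset.mem_Icc.2 ⟨hn, hj.trans hφ.le_apply⟩)).le

section InnerProductSpace

variable {E : Type*} [NormedAddCommGroup E] [InnerProductSpace ℝ E] [FiniteDimensional ℝ E]

lemma isCompact_setOf_orthonormal (ι : Type*) [Fintype ι] :
    IsCompact {v : ι → E | Orthonormal ℝ v} := by
  refine Metric.isCompact_of_isClosed_isBounded ?_ ?_
  · classical
    simp only [orthonormal_iff_ite, Set.ofPred_forall]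
    exact isClosed_iInter fun i => isClosed_iInter fun j =>
      isClosed_eq (by fun_prop) continuous_const
  · refine (Metric.isBounded_closedBall (x := 0) (r := 1)).subset fun v hv => ?_
    exact mem_closedBall_zero_iff.2 ((pi_norm_le_iff_of_nonneg zero_le_one).2 fun i => (hv.1 i).le)

lemma Submodule.le_finrank_iff_exists_orthonormal (W : Submodule ℝ E) {k : ℕ} :
    k ≤ Module.finrank ℝ W ↔ ∃ v : Fin k → E, Orthonormal ℝ v ∧ ∀ l, v l ∈ W := by
  constructor
  · intro hk
    let B := stdOrthonormalBasis ℝ W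
    refine ⟨fun l => B (Fin.castLE hk l), ?_, fun l => (B _).2⟩
    exact (B.orthonormal.comp_linearIsometry W.subtypeₗᵢ).comp _ (Fin.castLE_injective hk)
  · rintro ⟨v, hv, hvW⟩
    have hli : LinearIndependent ℝ fun l => (⟨v l, hvW l⟩ : W) :=
      LinearIndependent.of_comp W.subtype hv.linearIndependent
    simpa using hli.fintype_card_le_finrank

variable {F : Type*} [NormedAddCommGroup F] [NormedSpace ℝ F]

lemma le_finrank_growthSubspace_iff (M : ℕ → E →ₗ[ℝ] F) (q : ℝ) {k : ℕ} :
    k ≤ Module.finrank ℝ (growthSubspace M q) ↔ ∀ c : ℚ, q < c →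
      ∃ v : Fin k → E, Orthonormal ℝ v ∧ ∀ᶠ n : ℕ in atTop, ∀ l, ‖M n (v l)‖ ≤ exp (n * c) := by
  rw [Submodule.le_finrank_iff_exists_orthonormal]
  constructor
  · rintro ⟨v, hv, hvW⟩ c hc
    exact ⟨v, hv, eventually_all.2 fun l => hvW l c hc⟩
  · intro h
    obtain ⟨b, hb, hW⟩ := exists_growthSubspace_eq M q
    obtain ⟨c, hqc, hcb⟩ := exists_rat_btwn hb
    obtain ⟨v, hv, hvc⟩ := h c hqc
    rw [← hW c hqc hcb.le]
    exact ⟨v, hv, fun l => .of_eventually_le (hvc.mono fun n hn => hn l)⟩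

end InnerProductSpace

instance matBorelSpace {d : ℕ} : BorelSpace (Matrix (Fin d) (Fin d) ℝ) :=
  inferInstanceAs (BorelSpace (Fin d → Fin d → ℝ))

lemma measurable_finrank_growthSubspace {X : Type*} [MeasurableSpace X] {d : ℕ}
    {A : ℕ → X → Matrix (Fin d) (Fin d) ℝ} (hA : ∀ n, Measurable (A n)) (q : ℝ) :
    Measurable fun x => Module.finrank ℝ (growthSubspace (fun n => (A n x).toEuclideanLin) q) := by
  refine measurable_of_Ici fun k => ?_
  obtain ⟨t, htK, htc, hKt⟩ := (isCompact_setOf_orthonormal (E := EuclideanSpace ℝ (Fin d))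
    (Fin k)).isSeparable.exists_countable_dense_subset
  have := htc.to_subtype
  have hset : ∀ x, k ≤ Module.finrank ℝ (growthSubspace (fun n => (A n x).toEuclideanLin) q) ↔
      ∀ c : ℚ, q < c → ∃ N, ∀ m : ℕ, ∃ y : t, ∀ n ∈ Finset.Icc N m,
        ‖fun l => (A n x).toEuclideanLin (y.1 l)‖ < exp (n * c) + 1 / (m + 1) := by
    intro x
    rw [le_finrank_growthSubspace_iff]
    refine forall₂_congr fun c _ => ?_
    have := (isCompact_setOf_orthonormal (Fin k)).exists_eventually_le_iff htK hKt
      (f := fun n v => ‖fun l => (A n x).toEuclideanLin (v l)‖) (fun n => by fun_prop)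
      (fun n => exp (n * c))
    simpa only [pi_norm_le_iff_of_nonneg (exp_pos _).le, SetCoe.exists, exists_prop,
      Set.mem_ofPred_eq] using this
  simp only [Set.preimage, Set.mem_Ici, hset]
  refine measurableSet_setOfPred.2 <| .forall fun c => measurable_const.imp <| .exists fun N =>
    .forall fun m => .exists fun y => .forall fun n => measurable_const.imp ?_
  have hcont : Continuous fun B : Matrix (Fin d) (Fin d) ℝ =>
      ‖fun l => B.toEuclideanLin (y.1 l)‖ := by
    simp only [Matrix.toLpLin_apply]
    fun_prop
  exact measurableSet_setOfPred.1 (measurableSet_lt (hcont.measurable.comp (hA n)) measurable_const)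

lemma growthSubspace_comap_cocycle {X : Type*} {d : ℕ} {T : X → X}
    {A : ℕ → X → Matrix (Fin d) (Fin d) ℝ} (hcoc : ∀ x m n, A (m + n) x = A n (T^[m] x) * A m x)
    (x : X) (lam : ℝ) :
    (growthSubspace (fun n => (A n (T x)).toEuclideanLin) lam).comap (A 1 x).toEuclideanLin =
      growthSubspace (fun n => (A n x).toEuclideanLin) lam := by
  rw [← growthSubspace_comp, ← growthSubspace_comp_add_one (M := fun n => (A n x).toEuclideanLin)]
  congr 1
  funext n
  rw [add_comm, hcoc x 1 n, Function.iterate_one, Matrix.toLpLin_mul_same]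

lemma finrank_growthSubspace_apply_le {X : Type*} {d : ℕ} {T : X → X}
    {A : ℕ → X → Matrix (Fin d) (Fin d) ℝ} (hcoc : ∀ x m n, A (m + n) x = A n (T^[m] x) * A m x)
    (x : X) (lam : ℝ) :
    Module.finrank ℝ (growthSubspace (fun n => (A n (T x)).toEuclideanLin) lam) ≤
      Module.finrank ℝ (growthSubspace (fun n => (A n x).toEuclideanLin) lam) :=
  growthSubspace_comap_cocycle hcoc x lam ▸ Submodule.finrank_le_finrank_comap _ _

lemma MeasureTheory.MeasurePreserving.ae_comp_eq_of_le {X : Type*} [MeasurableSpace X]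
    {μ : Measure X} [IsFiniteMeasure μ] {T : X → X} (hT : MeasurePreserving T μ μ) {f : X → ℕ}
    (hf : Measurable f) (hle : ∀ x, f (T x) ≤ f x) : ∀ᵐ x ∂μ, f (T x) = f x := by
  have hk : ∀ k, T ⁻¹' {x | k ≤ f x} =ᵐ[μ] {x | k ≤ f x} := fun k =>
    have hS : MeasurableSet {x | k ≤ f x} := hf measurableSet_Ici
    ae_eq_of_subset_of_measure_ge (fun x hx => le_trans hx (hle x))
      (hT.measure_preimage hS.nullMeasurableSet).ge (hT.measurable hS).nullMeasurableSet
      (measure_ne_top μ _)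
  filter_upwards [ae_all_iff.2 hk] with x hx
  exact (hle x).antisymm ((hx (f x)).mpr le_rfl)

theorem stmt16_general {X : Type*} [MeasurableSpace X] {d : ℕ}
    (μ : Measure X) [IsProbabilityMeasure μ] (T : X → X)
    (hT : MeasurePreserving T μ μ)
    (𝔸 : ℕ → X → Matrix (Fin d) (Fin d) ℝ)
    (hmeas : Measurable fun p : ℕ × X => 𝔸 p.1 p.2)
    (hcoc : ∀ x m n, 𝔸 (m + n) x = 𝔸 n (T^[m] x) * 𝔸 m x) :
    ∀ᵐ x ∂μ, ∀ lam : ℝ,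
      Module.finrank ℝ (Submodule.span ℝ
        {v : EuclideanSpace ℝ (Fin d) |
          limsup (fun n : ℕ => (((n : ℝ)⁻¹ : ℝ) : EReal) * elog ‖matApp (𝔸 n (T x)) v‖) atTop
            ≤ (lam : EReal)}) =
      Module.finrank ℝ (Submodule.span ℝ
        {v : EuclideanSpace ℝ (Fin d) |
          limsup (fun n : ℕ => (((n : ℝ)⁻¹ : ℝ) : EReal) * elog ‖matApp (𝔸 n x) v‖) atTop
            ≤ (lam : EReal)}) := by
  have hA : ∀ n, Measurable (𝔸 n) := fun n => hmeas.comp measurable_prodMk_left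
  have hinv := fun c : ℚ => hT.ae_comp_eq_of_le (measurable_finrank_growthSubspace hA c)
    (finrank_growthSubspace_apply_le hcoc · c)
  filter_upwards [ae_all_iff.2 hinv] with x hx lam
  obtain ⟨b₁, hb₁, h₁⟩ := exists_growthSubspace_eq (fun n => (𝔸 n (T x)).toEuclideanLin) lam
  obtain ⟨b₂, hb₂, h₂⟩ := exists_growthSubspace_eq (fun n => (𝔸 n x).toEuclideanLin) lam
  obtain ⟨c, hc, hcb⟩ := exists_rat_btwn (lt_min hb₁ hb₂)
  have hxc := hx c
  rwa [h₁ c hc (hcb.le.trans (min_le_left _ _)), h₂ c hc (hcb.le.trans (min_le_right _ _)),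
    ← span_setOf_limsup_le_eq_growthSubspace, ← span_setOf_limsup_le_eq_growthSubspace] at hxc

theorem stmt16 {X : Type*} [MeasurableSpace X] {d : ℕ}
    (μ : Measure X) [IsProbabilityMeasure μ] (T : X → X)
    (hT : MeasurePreserving T μ μ)
    (𝔸 : ℕ → X → Matrix (Fin d) (Fin d) ℝ)
    (hmeas : Measurable fun p : ℕ × X => 𝔸 p.1 p.2)
    (hcoc0 : ∀ x, 𝔸 0 x = 1)
    (hcoc : ∀ x m n, 𝔸 (m + n) x = 𝔸 n (T^[m] x) * 𝔸 m x)
    (hint : Integrable (fun x => max 0 (Real.log (matOpNorm (𝔸 1 x)))) μ) :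
    ∀ᵐ x ∂μ, ∀ lam : ℝ,
      Module.finrank ℝ (Submodule.span ℝ
        {v : EuclideanSpace ℝ (Fin d) |
          limsup (fun n : ℕ => (((n : ℝ)⁻¹ : ℝ) : EReal) * elog ‖matApp (𝔸 n (T x)) v‖) atTop
            ≤ (lam : EReal)}) =
      Module.finrank ℝ (Submodule.span ℝ
        {v : EuclideanSpace ℝ (Fin d) |
          limsup (fun n : ℕ => (((n : ℝ)⁻¹ : ℝ) : EReal) * elog ‖matApp (𝔸 n x) v‖) atTop
            ≤ (lam : EReal)}) :=
  stmt16_general μ T hT 𝔸 hmeas hcoc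

end
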